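/- For each d ≥ 2 there exist a constant c_d > 0 and a natural number N such that for every n ≥ N and every θ ∈ [0, π], one has (1 − P_{n,d}(cos θ))² ≥ c_d · (2 − 2 P_{n,d}(cos θ) − (P_{n,d}'(cos θ) · sin θ)² / P_{n,d}'(1)). (This is the analytic form of the uniform lower bound on the critical radius of the level-n spherical-harmonic immersion of S^d.) -/

import Mathlib

open Real

/-- The Gegenbauer (ultraspherical) polynomial `C_n^λ`, via its explicit sum
`C_n^λ(x) = Σ_{k=0}^{⌊n/2⌋} (−1)^k Γ(n−k+λ)/(Γ(λ) k! (n−2k)!) (2x)^{n−2k}`. -/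
noncomputable def gegenbauerC (lam : ℝ) (n : ℕ) (x : ℝ) : ℝ :=
  ∑ k ∈ Finset.range (n / 2 + 1),
    (-1) ^ k * Real.Gamma ((n - k : ℕ) + lam) /
        (Real.Gamma lam * (k.factorial : ℝ) * ((n - 2 * k).factorial : ℝ)) *
      (2 * x) ^ (n - 2 * k)

/-- The Legendre polynomial of degree `n` in dimension `d+1`: the Gegenbauer polynomial
`C_n^{((d−1)/2)}` normalized so that its value at `1` is `1`. -/
noncomputable def legendreDim (d n : ℕ) (x : ℝ) : ℝ :=
  gegenbauerC (((d : ℝ) - 1) / 2) n x / gegenbauerC (((d : ℝ) - 1) / 2) n 1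

/-!
Write `P = P_{n,d}`, `D = d` and `L = P'(1) = n (n + d - 1) / d`. Then `P(1) = 1` and
`(1 - x²) P'' = D x P' - D L P`, and the claim is `2 (1 - P) - (1 - x²) P'² / L ≤ K (1 - P)²`
with `K = max d 128`.

The energy `(1 - x²) P'² + D L P²` has derivative `2 (D - 1) x P'²`, so it increases on `[0, 1]`
and `P² ≤ 1` there. Integrating factors `(1 - y²)^(D/2)` give `x P' ≤ L` on `(0, 1]`, and then
`P ≥ 1/2`, `P' ≥ L/2` on the window `[1 - 1/(4L), 1]`. Across the window the energy therefore
grows by a fixed fraction of `D L`, which forces `P² ≤ 31/32` to its left. Now either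
`1 - P ≥ 2/K` and the claim is immediate, or `x` is in the window, where the difference of the
two sides has derivative `2 P' ((D - 1) x P' / L + 1 - D P - K (1 - P)) ≤ 0` and vanishes at `1`.
Negative `x` reduce to positive ones because `x ↦ ±P(-x)` solves the same equation.
-/

open Set

noncomputable def gegenbauerCoeff (lam : ℝ) (n k : ℕ) : ℝ :=
  (-1) ^ k * Real.Gamma ((n - k : ℕ) + lam) /
    (Real.Gamma lam * (k.factorial : ℝ) * ((n - 2 * k).factorial : ℝ))

lemma gegenbauerC_eq_sum (lam : ℝ) (n : ℕ) (x : ℝ) :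
    gegenbauerC lam n x =
      ∑ k ∈ Finset.range (n / 2 + 1), gegenbauerCoeff lam n k * (2 * x) ^ (n - 2 * k) :=
  rfl

lemma hasDerivAt_two_mul_pow (m : ℕ) (x : ℝ) :
    HasDerivAt (fun y : ℝ => (2 * y) ^ m) (2 * m * (2 * x) ^ (m - 1)) x := by
  have h := ((hasDerivAt_id x).const_mul (2 : ℝ)).fun_pow m
  simp only [id, mul_one] at h
  exact h.congr_deriv (by ring)

lemma hasDerivAt_two_mul_mul_pow_pred (m : ℕ) (x : ℝ) :
    HasDerivAt (fun y : ℝ => 2 * m * (2 * y) ^ (m - 1))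
      (4 * m * (m - 1) * (2 * x) ^ (m - 2)) x := by
  rcases m with _ | m
  · simpa using hasDerivAt_const x (0 : ℝ)
  · have h := (hasDerivAt_two_mul_pow m x).const_mul (2 * ((m + 1 : ℕ) : ℝ))
    rw [show m + 1 - 2 = m - 1 by omega]
    simp only [Nat.add_sub_cancel]
    exact h.congr_deriv (by push_cast; ring)

lemma two_mul_pow_ode (lam x : ℝ) (m : ℕ) :
    (1 - x ^ 2) * (4 * m * (m - 1) * (2 * x) ^ (m - 2))
        - (2 * lam + 1) * x * (2 * m * (2 * x) ^ (m - 1))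
      = 4 * m * (m - 1) * (2 * x) ^ (m - 2) - m * (m + 2 * lam) * (2 * x) ^ m := by
  rcases m with _ | _ | m
  · simp
  · norm_num
    ring
  · simp only [show m + 2 - 1 = m + 1 by omega]
    push_cast
    ring

noncomputable def gegenbauerCDeriv (lam : ℝ) (n : ℕ) (x : ℝ) : ℝ :=
  ∑ k ∈ Finset.range (n / 2 + 1),
    gegenbauerCoeff lam n k * (2 * (n - 2 * k : ℕ) * (2 * x) ^ (n - 2 * k - 1))

noncomputable def gegenbauerCDeriv2 (lam : ℝ) (n : ℕ) (x : ℝ) : ℝ :=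
  ∑ k ∈ Finset.range (n / 2 + 1), gegenbauerCoeff lam n k *
    (4 * (n - 2 * k : ℕ) * ((n - 2 * k : ℕ) - 1) * (2 * x) ^ (n - 2 * k - 2))

lemma hasDerivAt_gegenbauerC (lam : ℝ) (n : ℕ) (x : ℝ) :
    HasDerivAt (gegenbauerC lam n) (gegenbauerCDeriv lam n x) x := by
  unfold gegenbauerC
  exact HasDerivAt.fun_sum fun _ _ => (hasDerivAt_two_mul_pow _ x).const_mul _

lemma hasDerivAt_gegenbauerCDeriv (lam : ℝ) (n : ℕ) (x : ℝ) :
    HasDerivAt (gegenbauerCDeriv lam n) (gegenbauerCDeriv2 lam n x) x :=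
  HasDerivAt.fun_sum fun _ _ => (hasDerivAt_two_mul_mul_pow_pred _ x).const_mul _

lemma gegenbauerCoeff_succ_mul (lam : ℝ) (hlam : 0 < lam) {n j : ℕ} (hj : 2 * j + 2 ≤ n) :
    gegenbauerCoeff lam n (j + 1) * ((j + 1) * (n - (j + 1) + lam))
      = -(gegenbauerCoeff lam n j * ((n - 2 * j : ℕ) * ((n - 2 * j : ℕ) - 1))) := by
  obtain ⟨p, rfl⟩ : ∃ p, n = 2 * j + 2 + p := ⟨n - (2 * j + 2), by omega⟩
  have hk : 2 * j + 2 + p - (j + 1) = (j + p) + 1 := by omega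
  have hk' : 2 * j + 2 + p - j = (j + p + 1) + 1 := by omega
  have hm : 2 * j + 2 + p - 2 * j = p + 1 + 1 := by omega
  have hm' : 2 * j + 2 + p - 2 * (j + 1) = p := by omega
  have hpos : (0 : ℝ) < (j + p + 1 : ℕ) + lam := by positivity
  have hΓ : Real.Gamma (((j + p + 1 + 1 : ℕ) : ℝ) + lam)
      = ((j + p + 1 : ℕ) + lam) * Real.Gamma ((j + p + 1 : ℕ) + lam) := by
    rw [← Real.Gamma_add_one hpos.ne']; push_cast; ring_nf
  have hΓlam : Real.Gamma lam ≠ 0 := (Real.Gamma_pos_of_pos hlam).ne'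
  unfold gegenbauerCoeff
  rw [hk, hk', hm, hm', hΓ, Nat.factorial_succ j, Nat.factorial_succ (p + 1), Nat.factorial_succ p]
  field_simp
  push_cast
  ring

theorem gegenbauerC_ode (lam : ℝ) (hlam : 0 < lam) (n : ℕ) (x : ℝ) :
    (1 - x ^ 2) * gegenbauerCDeriv2 lam n x - (2 * lam + 1) * x * gegenbauerCDeriv lam n x
      + n * (n + 2 * lam) * gegenbauerC lam n x = 0 := by
  set a := gegenbauerCoeff lam n
  set c : ℕ → ℝ := fun k =>
    a k * (4 * (n - 2 * k : ℕ) * ((n - 2 * k : ℕ) - 1) * (2 * x) ^ (n - 2 * k - 2))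
  set b : ℕ → ℝ := fun k => a k * (4 * k * (n - k + lam)) * (2 * x) ^ (n - 2 * k)
  have hterm : ∀ k ∈ Finset.range (n / 2 + 1),
      (1 - x ^ 2) *
          (a k * (4 * (n - 2 * k : ℕ) * ((n - 2 * k : ℕ) - 1) * (2 * x) ^ (n - 2 * k - 2)))
        - (2 * lam + 1) * x * (a k * (2 * (n - 2 * k : ℕ) * (2 * x) ^ (n - 2 * k - 1)))
        + n * (n + 2 * lam) * (a k * (2 * x) ^ (n - 2 * k)) = c k + b k := by
    intro k hk
    have hm : ((n - 2 * k : ℕ) : ℝ) = n - 2 * k := by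
      have := Finset.mem_range.mp hk
      rw [Nat.cast_sub (by omega)]; push_cast; ring
    linear_combination a k * two_mul_pow_ode lam x (n - 2 * k)
      - a k * (2 * x) ^ (n - 2 * k) * ((n - 2 * k : ℕ) + n - 2 * k + 2 * lam) * hm
  have hlast : c (n / 2) = 0 := by
    rcases (by omega : n - 2 * (n / 2) = 0 ∨ n - 2 * (n / 2) = 1) with h | h <;> simp [c, h]
  have hchain : ∀ j ∈ Finset.range (n / 2), c j + b (j + 1) = 0 := by
    intro j hj
    have hj : 2 * j + 2 ≤ n := by have := Finset.mem_range.mp hj; omega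
    simp only [c, b, show n - 2 * (j + 1) = n - 2 * j - 2 by omega]
    push_cast
    linear_combination 4 * (2 * x) ^ (n - 2 * j - 2) * gegenbauerCoeff_succ_mul lam hlam hj
  simp only [gegenbauerC_eq_sum, gegenbauerCDeriv, gegenbauerCDeriv2, Finset.mul_sum,
    ← Finset.sum_sub_distrib, ← Finset.sum_add_distrib]
  rw [Finset.sum_congr rfl hterm, Finset.sum_add_distrib, Finset.sum_range_succ,
    Finset.sum_range_succ' b, hlast]
  simp only [b, Nat.cast_zero, mul_zero, zero_mul, add_zero, ← Finset.sum_add_distrib]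
  exact Finset.sum_eq_zero hchain

lemma gegenbauerC_neg (lam : ℝ) (n : ℕ) (x : ℝ) :
    gegenbauerC lam n (-x) = (-1) ^ n * gegenbauerC lam n x := by
  simp only [gegenbauerC_eq_sum, Finset.mul_sum]
  refine Finset.sum_congr rfl fun k hk => ?_
  have hk : 2 * k ≤ n := by have := Finset.mem_range.mp hk; omega
  rw [show 2 * -x = -(2 * x) by ring, neg_pow, ← Nat.sub_add_cancel hk]
  simp only [Nat.add_sub_cancel, pow_add, pow_mul]
  norm_num
  ring

lemma antitoneOn_Icc_of_hasDerivAt {f f' : ℝ → ℝ} {a b : ℝ} (hf : ContinuousOn f (Icc a b))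
    (hf' : ∀ x ∈ Ioo a b, HasDerivAt f (f' x) x) (h : ∀ x ∈ Ioo a b, f' x ≤ 0) :
    AntitoneOn f (Icc a b) :=
  antitoneOn_of_hasDerivWithinAt_nonpos (convex_Icc a b) hf
    (by simpa only [interior_Icc] using fun x hx => (hf' x hx).hasDerivWithinAt)
    (by simpa only [interior_Icc] using h)

lemma monotoneOn_Icc_of_hasDerivAt {f f' : ℝ → ℝ} {a b : ℝ} (hf : ContinuousOn f (Icc a b))
    (hf' : ∀ x ∈ Ioo a b, HasDerivAt f (f' x) x) (h : ∀ x ∈ Ioo a b, 0 ≤ f' x) :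
    MonotoneOn f (Icc a b) :=
  monotoneOn_of_hasDerivWithinAt_nonneg (convex_Icc a b) hf
    (by simpa only [interior_Icc] using fun x hx => (hf' x hx).hasDerivWithinAt)
    (by simpa only [interior_Icc] using h)

lemma hasDerivAt_one_sub_sq_rpow {p : ℝ} (hp : 1 ≤ p) (x : ℝ) :
    HasDerivAt (fun y : ℝ => (1 - y ^ 2) ^ p) (-(2 * p * x * (1 - x ^ 2) ^ (p - 1))) x :=
  (((hasDerivAt_pow 2 x).const_sub 1).rpow_const (Or.inr hp)).congr_deriv
    (by simp only [Nat.cast_ofNat, Nat.add_one_sub_one, pow_one]; ring)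

lemma continuous_one_sub_sq_rpow {p : ℝ} (hp : 1 ≤ p) :
    Continuous fun y : ℝ => (1 - y ^ 2) ^ p :=
  continuous_iff_continuousAt.2 fun x => (hasDerivAt_one_sub_sq_rpow hp x).continuousAt

structure LegendreODE (P P' P'' : ℝ → ℝ) (D L : ℝ) : Prop where
  two_le : 2 ≤ D
  one_le : 1 ≤ L
  hasDerivAt : ∀ x, HasDerivAt P (P' x) x
  hasDerivAt_deriv : ∀ x, HasDerivAt P' (P'' x) x
  ode : ∀ x, (1 - x ^ 2) * P'' x = D * x * P' x - D * L * P x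
  apply_one : P 1 = 1

namespace LegendreODE

noncomputable def energy (P P' : ℝ → ℝ) (D L x : ℝ) : ℝ :=
  (1 - x ^ 2) * P' x ^ 2 + D * L * P x ^ 2

variable {P P' P'' : ℝ → ℝ} {D L : ℝ} (S : LegendreODE P P' P'' D L)
include S

lemma continuous : Continuous P :=
  continuous_iff_continuousAt.2 fun x => (S.hasDerivAt x).continuousAt

lemma continuous_deriv : Continuous P' :=
  continuous_iff_continuousAt.2 fun x => (S.hasDerivAt_deriv x).continuousAt

lemma deriv_one : P' 1 = L := by
  have h := S.ode 1
  rw [S.apply_one] at h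
  have hD : D ≠ 0 := by linarith [S.two_le]
  exact mul_left_cancel₀ hD (by linarith)

lemma deriv2_eq {x : ℝ} (hx : 1 - x ^ 2 ≠ 0) :
    P'' x = (D * x * P' x - D * L * P x) / (1 - x ^ 2) := by
  rw [eq_div_iff hx, mul_comm, S.ode]

lemma hasDerivAt_energy (x : ℝ) :
    HasDerivAt (energy P P' D L) (2 * (D - 1) * x * P' x ^ 2) x := by
  have h := (((hasDerivAt_pow 2 x).const_sub 1).fun_mul ((S.hasDerivAt_deriv x).fun_pow 2)).fun_add
    (((S.hasDerivAt x).fun_pow 2).const_mul (D * L))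
  refine h.congr_deriv ?_
  simp only [Nat.cast_ofNat]
  linear_combination 2 * P' x * S.ode x

lemma energy_le_energy {x y : ℝ} (hx : 0 ≤ x) (hxy : x ≤ y) :
    energy P P' D L x ≤ energy P P' D L y := by
  refine monotoneOn_Icc_of_hasDerivAt
    (fun z _ => (S.hasDerivAt_energy z).continuousAt.continuousWithinAt)
    (fun z _ => S.hasDerivAt_energy z) (fun z hz => ?_)
    (left_mem_Icc.2 hxy) (right_mem_Icc.2 hxy) hxy
  have : 0 ≤ D - 1 := by linarith [S.two_le]
  have : 0 ≤ z := hx.trans hz.1.le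
  positivity

lemma energy_one : energy P P' D L 1 = D * L := by
  simp [energy, S.apply_one]

lemma sq_le_one {x : ℝ} (hx0 : 0 ≤ x) (hx1 : x ≤ 1) : P x ^ 2 ≤ 1 := by
  have hE := S.energy_le_energy hx0 hx1
  rw [S.energy_one, energy] at hE
  have : 0 ≤ (1 - x ^ 2) * P' x ^ 2 := mul_nonneg (by nlinarith) (sq_nonneg _)
  have : 0 < D * L := mul_pos (by linarith [S.two_le]) (by linarith [S.one_le])
  nlinarith

lemma le_one {x : ℝ} (hx0 : 0 ≤ x) (hx1 : x ≤ 1) : P x ≤ 1 := by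
  nlinarith [S.sq_le_one hx0 hx1]

lemma mul_deriv_le {x : ℝ} (hx0 : 0 < x) (hx1 : x ≤ 1) : x * P' x ≤ L := by
  rcases hx1.eq_or_lt with rfl | hx1
  · rw [one_mul, S.deriv_one]
  have hL := S.one_le
  have hp : 1 ≤ D / 2 := by linarith [S.two_le]
  -- without the factor `1 / y` the derivative would have no sign
  set N : ℝ → ℝ := fun y => (L - y * P' y) * ((1 - y ^ 2) ^ (D / 2) / y)
  have hN : ∀ y ∈ Ioo x 1, HasDerivAt N
      (D * L * (P y - 1) * (1 - y ^ 2) ^ (D / 2 - 1) - L * (1 - y ^ 2) ^ (D / 2) / y ^ 2) y := by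
    intro y ⟨hxy, hy1⟩
    have hy0 : 0 < y := hx0.trans hxy
    have hb : 1 - y ^ 2 ≠ 0 := by nlinarith
    refine ((((hasDerivAt_id y).fun_mul (S.hasDerivAt_deriv y)).const_sub L).fun_mul
      ((hasDerivAt_one_sub_sq_rpow hp y).fun_div (hasDerivAt_id y) hy0.ne')).congr_deriv ?_
    simp only [id]
    rw [Real.rpow_sub_one hb, S.deriv2_eq hb]
    field_simp
    ring
  have hcont : ContinuousOn N (Icc x 1) :=
    (continuous_const.sub (continuous_id.mul S.continuous_deriv)).continuousOn.mul
      ((continuous_one_sub_sq_rpow hp).continuousOn.div continuousOn_id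
        fun y hy => (hx0.trans_le hy.1).ne')
  have hN' : ∀ y ∈ Ioo x 1,
      D * L * (P y - 1) * (1 - y ^ 2) ^ (D / 2 - 1) - L * (1 - y ^ 2) ^ (D / 2) / y ^ 2 ≤ 0 := by
    intro y ⟨hxy, hy1⟩
    have hb : 0 ≤ 1 - y ^ 2 := by nlinarith
    have hP : P y ≤ 1 := S.le_one (hx0.trans hxy).le hy1.le
    have hDL : 0 ≤ D * L := by nlinarith [S.two_le]
    have : 0 ≤ L * (1 - y ^ 2) ^ (D / 2) / y ^ 2 := by
      have := Real.rpow_nonneg hb (D / 2)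
      positivity
    nlinarith [mul_nonneg (mul_nonneg hDL (sub_nonneg.2 hP)) (Real.rpow_nonneg hb (D / 2 - 1))]
  have hle := antitoneOn_Icc_of_hasDerivAt hcont hN hN' (left_mem_Icc.2 hx1.le)
    (right_mem_Icc.2 hx1.le) hx1.le
  have hN1 : N 1 = 0 := by simp [N, Real.zero_rpow (by linarith : D / 2 ≠ 0)]
  rw [hN1] at hle
  have hφ : 0 < (1 - x ^ 2) ^ (D / 2) / x :=
    div_pos (Real.rpow_pos_of_pos (by nlinarith) _) hx0
  linarith [nonneg_of_mul_nonneg_left hle hφ]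

lemma near_one_bounds : 3 / 4 ≤ 1 - 1 / (4 * L) ∧ 1 - 1 / (4 * L) < 1 := by
  have hL := S.one_le
  have h : 1 / (4 * L) ≤ 1 / 4 := by gcongr; linarith
  exact ⟨by linarith, by have : 0 < 1 / (4 * L) := (by positivity); linarith⟩

lemma half_le_of_near_one {x : ℝ} (hx : 1 - 1 / (4 * L) ≤ x) (hx1 : x ≤ 1) :
    1 / 2 ≤ P x := by
  have hL := S.one_le
  have hx0 : 3 / 4 ≤ x := S.near_one_bounds.1.trans hx
  have hle := antitoneOn_Icc_of_hasDerivAt (f := fun y => P y - 2 * L * y)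
    ((S.continuous.sub (continuous_const.mul continuous_id)).continuousOn)
    (fun y _ => (S.hasDerivAt y).sub ((hasDerivAt_id y).const_mul (2 * L)))
    (fun y hy => by nlinarith [S.mul_deriv_le (by linarith [hy.1]) hy.2.le, hy.1])
    (left_mem_Icc.2 hx1) (right_mem_Icc.2 hx1) hx1
  simp only [S.apply_one, mul_one] at hle
  have : 2 * L * (1 - x) ≤ 1 / 2 := by
    calc 2 * L * (1 - x) ≤ 2 * L * (1 / (4 * L)) := by gcongr; linarith
      _ = 1 / 2 := by field_simp; ring
  linarith

lemma half_le_deriv_of_near_one {x : ℝ} (hx : 1 - 1 / (4 * L) ≤ x) (hx1 : x ≤ 1) :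
    L / 2 ≤ P' x := by
  have hL := S.one_le
  rcases hx1.eq_or_lt with rfl | hx1
  · rw [S.deriv_one]; linarith
  have hx0 : 3 / 4 ≤ x := S.near_one_bounds.1.trans hx
  have hp : 1 ≤ D / 2 := by linarith [S.two_le]
  set Z : ℝ → ℝ := fun y => (P' y - L / 2) * (1 - y ^ 2) ^ (D / 2)
  have hZ : ∀ y ∈ Ioo x 1,
      HasDerivAt Z (D * L * (1 - y ^ 2) ^ (D / 2 - 1) * (y / 2 - P y)) y := by
    intro y ⟨hxy, hy1⟩
    have hb : 1 - y ^ 2 ≠ 0 := by nlinarith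
    refine (((S.hasDerivAt_deriv y).sub_const (L / 2)).fun_mul
      (hasDerivAt_one_sub_sq_rpow hp y)).congr_deriv ?_
    rw [Real.rpow_sub_one hb, S.deriv2_eq hb]
    field_simp
    ring
  have hZ' : ∀ y ∈ Ioo x 1, D * L * (1 - y ^ 2) ^ (D / 2 - 1) * (y / 2 - P y) ≤ 0 := by
    intro y ⟨hxy, hy1⟩
    have hDL : 0 ≤ D * L := by nlinarith [S.two_le]
    have hr : 0 ≤ (1 - y ^ 2) ^ (D / 2 - 1) := Real.rpow_nonneg (by nlinarith) _
    have hP : 1 / 2 ≤ P y := S.half_le_of_near_one (hx.trans hxy.le) hy1.le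
    exact mul_nonpos_of_nonneg_of_nonpos (mul_nonneg hDL hr) (by linarith)
  have hle : Z 1 ≤ Z x := antitoneOn_Icc_of_hasDerivAt
    ((S.continuous_deriv.sub continuous_const).mul (continuous_one_sub_sq_rpow hp)).continuousOn
    hZ hZ' (left_mem_Icc.2 hx1.le) (right_mem_Icc.2 hx1.le) hx1.le
  have hZ1 : Z 1 = 0 := by simp [Z, Real.zero_rpow (by linarith : D / 2 ≠ 0)]
  rw [hZ1] at hle
  linarith [nonneg_of_mul_nonneg_left hle (Real.rpow_pos_of_pos (by nlinarith) (D / 2))]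

lemma energy_near_one_le : energy P P' D L (1 - 1 / (4 * L)) ≤ D * L * (31 / 32) := by
  have hL := S.one_le
  have hD := S.two_le
  obtain ⟨ha, ha1⟩ := S.near_one_bounds
  have hle := monotoneOn_Icc_of_hasDerivAt
    (f := fun y => energy P P' D L y - (D - 1) * L ^ 2 / 4 * y)
    (fun y _ => ((S.hasDerivAt_energy y).sub
      ((hasDerivAt_id y).const_mul _)).continuousAt.continuousWithinAt)
    (fun y _ => (S.hasDerivAt_energy y).sub ((hasDerivAt_id y).const_mul ((D - 1) * L ^ 2 / 4)))
    (fun y ⟨hy, hy1⟩ => by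
      have h1 : L / 2 ≤ P' y := S.half_le_deriv_of_near_one hy.le hy1.le
      have h2 : L ^ 2 / 4 ≤ P' y ^ 2 := by nlinarith
      have h3 : 0 ≤ D - 1 := by linarith
      simp only [mul_one]
      nlinarith [mul_le_mul_of_nonneg_left h2 h3, mul_nonneg h3 (sq_nonneg (P' y))])
    (left_mem_Icc.2 ha1.le) (right_mem_Icc.2 ha1.le) ha1.le
  simp only [S.energy_one] at hle
  have : (D - 1) * L ^ 2 / 4 * (1 - (1 - 1 / (4 * L))) = (D - 1) * L / 16 := by
    field_simp; ring
  nlinarith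

lemma sq_le_of_le_near_one {x : ℝ} (hx0 : 0 ≤ x) (hx : x ≤ 1 - 1 / (4 * L)) :
    P x ^ 2 ≤ 31 / 32 := by
  have hE := (S.energy_le_energy hx0 hx).trans S.energy_near_one_le
  rw [energy] at hE
  have : 0 ≤ (1 - x ^ 2) * P' x ^ 2 :=
    mul_nonneg (by nlinarith [S.near_one_bounds.2]) (sq_nonneg _)
  have : 0 < D * L := mul_pos (by linarith [S.two_le]) (by linarith [S.one_le])
  nlinarith

lemma neg_le_of_nonneg {x : ℝ} (hx0 : 0 ≤ x) (hx1 : x ≤ 1) : -(63 / 64) ≤ P x := by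
  rcases le_or_gt x (1 - 1 / (4 * L)) with hx | hx
  · nlinarith [S.sq_le_of_le_near_one hx0 hx] -- `(63/64)² > 31/32`
  · linarith [S.half_le_of_near_one hx.le hx1]

lemma two_mul_sub_le_of_near_one {K : ℝ} (hK : D ≤ K) {x : ℝ} (hx : 1 - 1 / (4 * L) ≤ x)
    (hx1 : x ≤ 1) : 2 * (1 - P x) - (1 - x ^ 2) * P' x ^ 2 / L ≤ K * (1 - P x) ^ 2 := by
  have hL : 0 < L := by linarith [S.one_le]
  have hx0 : 3 / 4 ≤ x := S.near_one_bounds.1.trans hx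
  set A : ℝ → ℝ := fun y => (1 - y ^ 2) * P' y ^ 2 / L - 2 * (1 - P y) + K * (1 - P y) ^ 2
  have hA : ∀ y, HasDerivAt A
      (2 * P' y * ((D - 1) * y * P' y / L + 1 - D * P y - K * (1 - P y))) y := by
    intro y
    refine (((((hasDerivAt_pow 2 y).const_sub 1).fun_mul
      ((S.hasDerivAt_deriv y).fun_pow 2)).div_const L).fun_sub
      (((S.hasDerivAt y).const_sub 1).const_mul 2)).fun_add
      ((((S.hasDerivAt y).const_sub 1).fun_pow 2).const_mul K) |>.congr_deriv ?_
    field_simp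
    linear_combination (2 * P' y) * S.ode y
  have hA' : ∀ y ∈ Ioo x 1,
      2 * P' y * ((D - 1) * y * P' y / L + 1 - D * P y - K * (1 - P y)) ≤ 0 := by
    intro y ⟨hxy, hy1⟩
    have hP' : 0 ≤ P' y := by linarith [S.half_le_deriv_of_near_one (hx.trans hxy.le) hy1.le]
    have hP : P y ≤ 1 := S.le_one (by linarith) hy1.le
    have hyP : (D - 1) * y * P' y / L ≤ D - 1 := by
      rw [div_le_iff₀ hL, mul_assoc]
      exact mul_le_mul_of_nonneg_left (S.mul_deriv_le (by linarith) hy1.le) (by linarith [S.two_le])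
    have : D * (1 - P y) ≤ K * (1 - P y) := mul_le_mul_of_nonneg_right hK (by linarith)
    exact mul_nonpos_of_nonneg_of_nonpos (by positivity) (by linarith)
  have hle : A 1 ≤ A x := antitoneOn_Icc_of_hasDerivAt
    (fun y _ => (hA y).continuousAt.continuousWithinAt) (fun y _ => hA y) hA'
    (left_mem_Icc.2 hx1) (right_mem_Icc.2 hx1) hx1
  have hA1 : A 1 = 0 := by simp [A, S.apply_one]
  simp only [A, hA1] at hle
  linarith

lemma two_mul_sub_le_of_nonneg {K : ℝ} (hKD : D ≤ K) (hK : 128 ≤ K) {x : ℝ} (hx0 : 0 ≤ x)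
    (hx1 : x ≤ 1) : 2 * (1 - P x) - (1 - x ^ 2) * P' x ^ 2 / L ≤ K * (1 - P x) ^ 2 := by
  have hL : 0 < L := by linarith [S.one_le]
  have hderiv : 0 ≤ (1 - x ^ 2) * P' x ^ 2 / L := by
    have : 0 ≤ 1 - x ^ 2 := by nlinarith
    positivity
  rcases le_or_gt (2 / K) (1 - P x) with hfar | hclose
  · have : 2 ≤ K * (1 - P x) := by rwa [div_le_iff₀' (by linarith)] at hfar
    nlinarith
  · have : 2 / K ≤ 1 / 64 := by rw [div_le_div_iff₀ (by linarith) (by norm_num)]; linarith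
    refine S.two_mul_sub_le_of_near_one hKD (not_lt.1 fun hx => ?_) hx1
    nlinarith [S.sq_le_of_le_near_one hx0 hx.le]

lemma comp_neg {s : ℝ} (hs : s * P (-1) = 1) :
    LegendreODE (fun x => s * P (-x)) (fun x => -(s * P' (-x))) (fun x => s * P'' (-x)) D L where
  two_le := S.two_le
  one_le := S.one_le
  hasDerivAt x := by
    simpa using ((S.hasDerivAt (-x)).comp x (hasDerivAt_neg x)).const_mul s
  hasDerivAt_deriv x := by
    simpa using (((S.hasDerivAt_deriv (-x)).comp x (hasDerivAt_neg x)).const_mul s).fun_neg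
  ode x := by linear_combination s * S.ode (-x)
  apply_one := hs

theorem two_mul_sub_le {K : ℝ} (hKD : D ≤ K) (hK : 128 ≤ K)
    (hsym : P (-1) = 1 ∨ P (-1) = -1) {x : ℝ} (hx0 : -1 ≤ x) (hx1 : x ≤ 1) :
    2 * (1 - P x) - (1 - x ^ 2) * P' x ^ 2 / L ≤ K * (1 - P x) ^ 2 := by
  rcases le_total 0 x with hx | hx
  · exact S.two_mul_sub_le_of_nonneg hKD hK hx hx1
  rcases hsym with heven | hodd
  · simpa using (S.comp_neg (s := 1) (by rw [heven]; norm_num)).two_mul_sub_le_of_nonneg hKD hK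
      (x := -x) (by linarith) (by linarith)
  · have h := (S.comp_neg (s := -1) (by rw [hodd]; norm_num)).neg_le_of_nonneg
      (x := -x) (by linarith) (by linarith)
    simp only [neg_neg, neg_one_mul] at h
    have hL : 0 < L := by linarith [S.one_le]
    have : 0 ≤ (1 - x ^ 2) * P' x ^ 2 / L := by
      have : 0 ≤ 1 - x ^ 2 := by nlinarith
      positivity
    nlinarith

lemma two_sub_le_of_cos {K : ℝ} (hKD : D ≤ K) (hK : 128 ≤ K)
    (hsym : P (-1) = 1 ∨ P (-1) = -1) (θ : ℝ) :
    2 - 2 * P (cos θ) - (deriv P (cos θ) * sin θ) ^ 2 / deriv P 1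
      ≤ K * (1 - P (cos θ)) ^ 2 := by
  rw [(S.hasDerivAt _).deriv, (S.hasDerivAt _).deriv, S.deriv_one, mul_pow, sin_sq]
  convert S.two_mul_sub_le hKD hK hsym (neg_one_le_cos θ) (cos_le_one θ) using 1
  ring

end LegendreODE

lemma legendreODE_legendreDim {d n : ℕ} (hd : 2 ≤ d) (hn : 1 ≤ n)
    (h1 : gegenbauerC (((d : ℝ) - 1) / 2) n 1 ≠ 0) :
    LegendreODE (legendreDim d n)
      (fun x => gegenbauerCDeriv (((d : ℝ) - 1) / 2) n x / gegenbauerC (((d : ℝ) - 1) / 2) n 1)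
      (fun x => gegenbauerCDeriv2 (((d : ℝ) - 1) / 2) n x / gegenbauerC (((d : ℝ) - 1) / 2) n 1)
      d (n * (n + d - 1) / d) where
  two_le := by exact_mod_cast hd
  one_le := by
    have hd' : (2 : ℝ) ≤ d := by exact_mod_cast hd
    have hn' : (1 : ℝ) ≤ n := by exact_mod_cast hn
    rw [le_div_iff₀ (by linarith)]
    nlinarith
  hasDerivAt x := (hasDerivAt_gegenbauerC _ n x).div_const _
  hasDerivAt_deriv x := (hasDerivAt_gegenbauerCDeriv _ n x).div_const _
  ode x := by
    have hd' : (2 : ℝ) ≤ d := by exact_mod_cast hd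
    have h := gegenbauerC_ode (((d : ℝ) - 1) / 2) (by linarith) n x
    have : (d : ℝ) ≠ 0 := by positivity
    simp only [legendreDim]
    field_simp
    linear_combination h
  apply_one := div_self h1

lemma legendreDim_neg_one {d n : ℕ} (h1 : gegenbauerC (((d : ℝ) - 1) / 2) n 1 ≠ 0) :
    legendreDim d n (-1) = (-1) ^ n := by
  rw [legendreDim, gegenbauerC_neg, mul_div_assoc, div_self h1, mul_one]

/-- For each `d ≥ 2` there are `c_d > 0` and `N` such that for all `n ≥ N` and `θ ∈ [0, π]`,
`(1 − P_{n,d}(cos θ))² ≥ c_d (2 − 2 P_{n,d}(cos θ) − (P_{n,d}'(cos θ) sin θ)²/P_{n,d}'(1))`. -/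
theorem uniform_lower_bound_critical_radius_Sd (d : ℕ) (hd : 2 ≤ d) :
    ∃ c : ℝ, 0 < c ∧ ∃ N : ℕ, ∀ n : ℕ, N ≤ n → ∀ θ ∈ Set.Icc (0 : ℝ) π,
      (1 - legendreDim d n (cos θ)) ^ 2 ≥
        c * (2 - 2 * legendreDim d n (cos θ) -
          (deriv (legendreDim d n) (cos θ) * sin θ) ^ 2 / deriv (legendreDim d n) 1) := by
  have hK : (0 : ℝ) < max (d : ℝ) 128 := by positivity
  refine ⟨1 / max (d : ℝ) 128, by positivity, 1, fun n hn θ _ => ?_⟩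
  rw [ge_iff_le, one_div_mul_eq_div, div_le_iff₀' hK]
  by_cases h1 : gegenbauerC (((d : ℝ) - 1) / 2) n 1 = 0
  · -- impossible (`C_n^λ(1) > 0`), but then `legendreDim d n = 0` since `x / 0 = 0`
    have hP : legendreDim d n = fun _ => 0 := funext fun x => by simp [legendreDim, h1]
    simp only [hP, deriv_const', div_zero, sub_zero, mul_zero]
    linarith [le_max_right (d : ℝ) 128]
  have S := legendreODE_legendreDim hd hn h1
  have hsym : legendreDim d n (-1) = 1 ∨ legendreDim d n (-1) = -1 := by
    rw [legendreDim_neg_one h1]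
    exact neg_one_pow_eq_or ℝ n
  exact S.two_sub_le_of_cos (le_max_left _ _) (le_max_right _ _) hsym θ
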